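/- arXiv:0807.4203 — 3 statements merged into one kernel-verified Lean document; each statement's English description precedes it below -/
import Mathlib

section
/- Let k be a natural number, G = (ℤ/2ℤ)^k, A = F₂[G] its group algebra over F₂, and I ⊆ A the augmentation ideal. Then the (k+1)-st power of the augmentation ideal vanishes: I^{k+1} = 0. -/
/-!
Setting: `Gk k = (ℤ/2ℤ)^k` written multiplicatively; `Ak k = F₂[Gk k]` its group algebra over
`F₂ = ZMod 2`; `aug` the augmentation homomorphism and `augI` the augmentation ideal.
-/

noncomputable section

/-- The elementary abelian 2-group `(ℤ/2ℤ)^k`, written multiplicatively. -/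
abbrev Gk (k : ℕ) := Multiplicative (Fin k → ZMod 2)

/-- The group algebra `F₂[(ℤ/2ℤ)^k]`. -/
abbrev Ak (k : ℕ) := MonoidAlgebra (ZMod 2) (Gk k)

/-- The augmentation homomorphism `ε : F₂[G] → F₂`, `ε(∑ a_g · g) = ∑ a_g`. -/
def aug (k : ℕ) : Ak k →ₐ[ZMod 2] ZMod 2 :=
  MonoidAlgebra.lift (ZMod 2) (ZMod 2) (Gk k) 1

/-- The augmentation ideal `I = ker ε`. -/
def augI (k : ℕ) : Ideal (Ak k) := RingHom.ker (aug k).toRingHom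

/-!
The augmentation ideal is spanned by the elements `g - 1` for `g` in any generating set of `G`,
here by the `k` elements `xᵢ = eᵢ - 1` for the standard basis `eᵢ` of `(ℤ/2ℤ)^k`. In
characteristic `2`, `xᵢ² = eᵢ² - 1 = 0`, and a product of `k + 1` generators repeats some `xᵢ`.
-/

open MonoidAlgebra

theorem sub_one_sq_eq_zero_of_sq_eq_one {A : Type*} [CommRing A] [CharP A 2] {x : A}
    (hx : x ^ 2 = 1) : (x - 1) ^ 2 = 0 := by
  rw [CharTwo.sub_eq_add, CharTwo.add_sq, hx, one_pow, CharTwo.add_self_eq_zero]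

theorem Finset.prod_eq_zero_of_mul_eq_zero {ι M : Type*} [CommMonoidWithZero M] [DecidableEq ι]
    {s : Finset ι} {f : ι → M} {i j : ι} (hi : i ∈ s) (hj : j ∈ s) (hij : i ≠ j)
    (h : f i * f j = 0) : ∏ k ∈ s, f k = 0 := by
  rw [← Finset.mul_prod_erase s f hi,
    ← Finset.mul_prod_erase _ f (Finset.mem_erase.2 ⟨hij.symm, hj⟩), ← mul_assoc, h, zero_mul]

theorem Ideal.span_range_pow_eq_bot_of_card_lt {R ι : Type*} [CommSemiring R] [Fintype ι]
    {x : ι → R} {n : ℕ} (hn : Fintype.card ι < n) (hx : ∀ i, x i ^ 2 = 0) :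
    Ideal.span (Set.range x) ^ n = ⊥ := by
  classical
  rw [eq_bot_iff, ← Ideal.submodule_span_eq, Submodule.span_pow, Submodule.span_le]
  intro a ha
  obtain ⟨f, rfl⟩ := Set.mem_pow.1 ha
  choose p hp using fun j => (f j).2
  obtain ⟨j₁, j₂, hne, hpj⟩ := Fintype.exists_ne_map_eq_of_card_lt p (by simpa using hn)
  rw [List.prod_ofFn, ← Finset.prod_congr rfl fun j _ => hp j,
    Finset.prod_eq_zero_of_mul_eq_zero (Finset.mem_univ j₁) (Finset.mem_univ j₂) hne
    (by rw [hpj, ← sq, hx])]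
  exact zero_mem _

namespace MonoidAlgebra

variable {R G : Type*}

theorem of_sub_one_mem_span_of_mem_closure [Ring R] [Monoid G] {T : Set G} {g : G}
    (hg : g ∈ Submonoid.closure T) :
    of R G g - 1 ∈ Ideal.span ((fun t => of R G t - 1) '' T) := by
  induction hg using Submonoid.closure_induction with
  | mem t ht => exact Ideal.subset_span ⟨t, ht, rfl⟩
  | one => rw [map_one, sub_self]; exact zero_mem _
  | mul g h _ _ hg hh =>
    rw [map_mul, show of R G g * of R G h - 1 = of R G g * (of R G h - 1) + (of R G g - 1) by
      noncomm_ring]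
    exact add_mem (Ideal.mul_mem_left _ _ hh) hg

variable [CommRing R] [Monoid G]

theorem sub_algebraMap_lift_one_mem_span (f : R[G]) :
    f - algebraMap R R[G] (lift R R G 1 f) ∈ Ideal.span (Set.range fun g => of R G g - 1) := by
  induction f using induction_linear with
  | zero => simp
  | add f f' hf hf' => rw [map_add, map_add, add_sub_add_comm]; exact add_mem hf hf'
  | single g r =>
    rw [show single g r - algebraMap R R[G] (lift R R G 1 (single g r)) = r • (of R G g - 1) by
      simp [smul_sub, Algebra.algebraMap_eq_smul_one]]
    exact Submodule.smul_of_tower_mem _ r (Ideal.subset_span ⟨g, rfl⟩)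

theorem ker_lift_one :
    RingHom.ker (lift R R G 1) = Ideal.span (Set.range fun g => of R G g - 1) := by
  refine le_antisymm (fun f hf => ?_) (Ideal.span_le.2 ?_)
  · simpa [RingHom.mem_ker.1 hf] using sub_algebraMap_lift_one_mem_span f
  · rintro _ ⟨g, rfl⟩
    simp

theorem ker_lift_one_eq_span_of_closure_eq_top {ι : Type*} {e : ι → G}
    (he : Submonoid.closure (Set.range e) = ⊤) :
    RingHom.ker (lift R R G 1) = Ideal.span (Set.range fun i => of R G (e i) - 1) := by
  rw [ker_lift_one]
  refine le_antisymm (Ideal.span_le.2 ?_)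
    (Ideal.span_mono (Set.range_comp_subset_range e fun g => of R G g - 1))
  rintro _ ⟨g, rfl⟩
  have hg := of_sub_one_mem_span_of_mem_closure (R := R) (he ▸ Submonoid.mem_top g)
  rwa [← Set.range_comp] at hg

end MonoidAlgebra

theorem Multiplicative.closure_range_ofAdd_single_one_eq_top {ι : Type*} [Fintype ι]
    [DecidableEq ι] (n : ℕ) [NeZero n] :
    Submonoid.closure (Set.range fun i : ι => ofAdd (Pi.single i (1 : ZMod n))) = ⊤ := by
  refine eq_top_iff.2 fun g _ => ?_
  have hg : g = ∏ i, ofAdd (Pi.single i (1 : ZMod n)) ^ (g.toAdd i).val := by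
    apply toAdd.injective
    simpa [toAdd_prod, ← Pi.single_smul] using (Finset.univ_sum_single g.toAdd).symm
  rw [hg]
  exact Submonoid.prod_mem _ fun i _ =>
    Submonoid.pow_mem _ (Submonoid.subset_closure (Set.mem_range_self i)) _

/-- The `(k+1)`-st power of the augmentation ideal vanishes: `I^(k+1) = 0`. -/
theorem pow_succ_augI_eq_bot (k : ℕ) : augI k ^ (k + 1) = ⊥ := by
  have : CharP (Ak k) 2 := charP_of_injective_algebraMap' (ZMod 2) 2
  have hI : augI k = Ideal.span (Set.range fun i : Fin k =>
      of (ZMod 2) (Gk k) (Multiplicative.ofAdd (Pi.single i 1)) - 1) := by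
    rw [augI, aug]
    exact ker_lift_one_eq_span_of_closure_eq_top
      (Multiplicative.closure_range_ofAdd_single_one_eq_top 2)
  have hsq (g : Gk k) : g ^ 2 = 1 :=
    Multiplicative.toAdd.injective (ZModModule.char_nsmul_eq_zero 2 g.toAdd)
  rw [hI]
  exact Ideal.span_range_pow_eq_bot_of_card_lt (by simp) fun i =>
    sub_one_sq_eq_zero_of_sq_eq_one (by rw [← map_pow, hsq, map_one])
end
end

section
/- Let k be a natural number, G = (ℤ/2ℤ)^k, A = F₂[G] its group algebra over F₂, and I ⊆ A the augmentation ideal. For every q with 0 ≤ q ≤ k, the quotient I^q / I^{q+1} is an F₂-vector space of dimension equal to the binomial coefficient C(k, q). (Here I^0 = A.) -/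
/-!
Setting: `Gk k = (ℤ/2ℤ)^k` written multiplicatively; `Ak k = F₂[Gk k]` its group algebra over
`F₂ = ZMod 2`; `aug` the augmentation homomorphism and `augI` the augmentation ideal.
The quotient `I^q / I^{q+1}` is realized as the quotient of the `F₂`-vector space `I^q`
by the `F₂`-subspace `I^{q+1}` (pulled back along the inclusion `I^q ⊆ A`).
-/

noncomputable section

/-!
Let `xᵢ = eᵢ - 1` for the standard generators `eᵢ` of `G`; in characteristic 2, `xᵢ² = 0`.
The monomials `x_S = ∏_{i ∈ S} xᵢ` span `A` (each `eᵢ = xᵢ + 1` lies in their span, which is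
closed under products), so, being `2^k = dim A` in number, they form a basis. Since
`x_S x_T` is `x_{S ∪ T}` or `0`, the span of the `x_S` with `|S| ≥ q` is the `q`-th power of the
ideal generated by the `xᵢ`, and that ideal is `I`: it lies in `I`, and an element
`c • 1 + (terms with S ≠ ∅)` of `I` has `c = ε(…) = 0`. So `I^q / I^{q+1}` has a basis indexed
by the `q`-subsets of `{1, …, k}`.
-/

section SquareZero

variable (R : Type*) {A ι : Type*} [CommSemiring R] [CommSemiring A] [Algebra R A]

def monomialSpan (x : ι → A) (q : ℕ) : Submodule R A :=
  Submodule.span R ((fun S : Finset ι => ∏ i ∈ S, x i) '' {S | q ≤ S.card})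

variable {R} {x : ι → A}

lemma prod_mem_monomialSpan {q : ℕ} {S : Finset ι} (h : q ≤ S.card) :
    ∏ i ∈ S, x i ∈ monomialSpan R x q :=
  Submodule.subset_span ⟨S, h, rfl⟩

lemma prod_mul_prod_eq_zero_of_not_disjoint {M : Type*} [CommMonoidWithZero M] {f : ι → M}
    (hf : ∀ i, f i * f i = 0) {S T : Finset ι} (h : ¬ Disjoint S T) :
    (∏ i ∈ S, f i) * ∏ i ∈ T, f i = 0 := by
  classical
  obtain ⟨i, hiS, hiT⟩ := Finset.not_disjoint_iff.mp h
  rw [← Finset.mul_prod_erase _ _ hiS, ← Finset.mul_prod_erase _ _ hiT, mul_mul_mul_comm, hf,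
    zero_mul]

lemma monomialSpan_mul_le (hx : ∀ i, x i * x i = 0) (p q : ℕ) :
    monomialSpan R x p * monomialSpan R x q ≤ monomialSpan R x (p + q) := by
  classical
  rw [monomialSpan, monomialSpan, Submodule.span_mul_span, Submodule.span_le]
  rintro _ ⟨_, ⟨S, hS, rfl⟩, _, ⟨T, hT, rfl⟩, rfl⟩
  dsimp only
  by_cases hST : Disjoint S T
  · rw [← Finset.prod_union hST]
    apply prod_mem_monomialSpan
    rw [Finset.card_union_of_disjoint hST]
    exact add_le_add hS hT
  · rw [prod_mul_prod_eq_zero_of_not_disjoint hx hST]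
    exact zero_mem _

lemma monomialSpan_zero_eq_sup : monomialSpan R x 0 = monomialSpan R x 1 ⊔ R ∙ 1 := by
  have : {S : Finset ι | 0 ≤ S.card} = insert ∅ {S | 1 ≤ S.card} := by
    ext S; simp [Finset.one_le_card, Finset.nonempty_iff_ne_empty, eq_or_ne]
  rw [monomialSpan, this, Set.image_insert_eq, Submodule.span_insert, Finset.prod_empty, sup_comm]
  rfl

theorem restrictScalars_span_range_pow (hx : ∀ i, x i * x i = 0)
    (htop : monomialSpan R x 0 = ⊤) (q : ℕ) :
    ((Ideal.span (Set.range x)) ^ q).restrictScalars R = monomialSpan R x q := by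
  set J := Ideal.span (Set.range x)
  have hJ : J.restrictScalars R ≤ monomialSpan R x 1 := by
    intro a ha
    induction ha using Submodule.span_induction with
    | mem _ h =>
      obtain ⟨i, rfl⟩ := h
      simpa using prod_mem_monomialSpan (R := R) (x := x) (S := {i}) le_rfl
    | zero => exact zero_mem _
    | add _ _ _ _ ha hb => exact add_mem ha hb
    | smul a _ _ hb =>
      have := Submodule.mul_mem_mul (htop ▸ Submodule.mem_top (x := a)) hb
      exact monomialSpan_mul_le hx 0 1 (by simpa using this)
  apply le_antisymm
  · induction q with
    | zero => simp [htop]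
    | succ q ih =>
      rw [pow_succ, Ideal.restrictScalars_mul]
      exact (mul_le_mul' ih hJ).trans (monomialSpan_mul_le hx q 1)
  · rw [monomialSpan, Submodule.span_le]
    rintro _ ⟨S, hS, rfl⟩
    refine Ideal.pow_le_pow_right hS ?_
    rw [← Finset.prod_const]
    exact Ideal.prod_mem_prod fun i _ => Ideal.subset_span ⟨i, rfl⟩

end SquareZero

lemma finrank_span_image_eq_card {R M ι : Type*} [Ring R] [Nontrivial R] [StrongRankCondition R]
    [AddCommGroup M] [Module R M] {b : ι → M} (hb : LinearIndependent R b) (s : Set ι)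
    [Fintype s] : Module.finrank R (Submodule.span R (b '' s)) = Fintype.card s := by
  rw [Set.image_eq_range]
  exact finrank_span_eq_card (hb.comp _ Subtype.val_injective)

lemma card_finset_le_card_eq_add_choose (α : Type*) [Fintype α] (q : ℕ) :
    Fintype.card {S : Finset α // q ≤ S.card} =
      Fintype.card {S : Finset α // q + 1 ≤ S.card} + (Fintype.card α).choose q := by
  rw [← Fintype.card_finset_len, ← Fintype.card_subtype_or_disjoint]
  · exact Fintype.card_congr (Equiv.subtypeEquivRight fun S => by omega)
  · intro p h1 h2 S hS
    have := h1 S hS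
    have := h2 S hS
    simp_all

instance (k : ℕ) : CharP (Ak k) 2 := charP_of_injective_algebraMap' (ZMod 2) 2

open MonoidAlgebra in
def augGen (k : ℕ) (i : Fin k) : Ak k :=
  of (ZMod 2) (Gk k) (Multiplicative.ofAdd (Pi.single i 1)) - 1

lemma augGen_mul_self {k : ℕ} (i : Fin k) : augGen k i * augGen k i = 0 := by
  have h2 : (Pi.single i 1 + Pi.single i 1 : Fin k → ZMod 2) = 0 := by
    rw [← Pi.single_add, show (1 + 1 : ZMod 2) = 0 from rfl, Pi.single_zero]
  rw [augGen, CharTwo.sub_eq_add, CharTwo.add_mul_self, ← map_mul, ← ofAdd_add, h2, ofAdd_zero,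
    map_one, one_mul, CharTwo.add_self_eq_zero]

lemma augGen_mem_augI {k : ℕ} (i : Fin k) : augGen k i ∈ augI k := by
  simp [augI, aug, augGen]

open MonoidAlgebra in
lemma of_mem_monomialSpan_zero {k : ℕ} (g : Gk k) :
    of (ZMod 2) (Gk k) g ∈ monomialSpan (ZMod 2) (augGen k) 0 := by
  have hone : (1 : Ak k) ∈ monomialSpan (ZMod 2) (augGen k) 0 := by
    simpa using prod_mem_monomialSpan (R := ZMod 2) (x := augGen k) (S := ∅) le_rfl
  have hgen (i : Fin k) : augGen k i ∈ monomialSpan (ZMod 2) (augGen k) 0 := by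
    simpa using prod_mem_monomialSpan (R := ZMod 2) (x := augGen k) (S := {i}) (Nat.zero_le _)
  rw [← ofAdd_toAdd g, ← Finset.univ_sum_single (Multiplicative.toAdd g), ofAdd_sum, map_prod]
  refine Finset.prod_induction _ (· ∈ monomialSpan (ZMod 2) (augGen k) 0)
    (fun a b ha hb => monomialSpan_mul_le augGen_mul_self 0 0 (Submodule.mul_mem_mul ha hb))
    hone fun i _ => ?_
  obtain h | h : Multiplicative.toAdd g i = 0 ∨ Multiplicative.toAdd g i = 1 := by
    generalize Multiplicative.toAdd g i = a; revert a; decide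
  · rw [h, Pi.single_zero, ofAdd_zero, map_one]
    exact hone
  · rw [h, ← sub_add_cancel (of _ _ _) 1]
    exact add_mem (hgen i) hone

lemma monomialSpan_augGen_zero (k : ℕ) : monomialSpan (ZMod 2) (augGen k) 0 = ⊤ := by
  refine eq_top_iff.mpr fun a _ => ?_
  exact Submodule.span_le.mpr (by rintro _ ⟨g, -, rfl⟩; exact of_mem_monomialSpan_zero g)
    (MonoidAlgebra.mem_span_support_coeff a)

lemma augI_eq_span (k : ℕ) : augI k = Ideal.span (Set.range (augGen k)) := by
  set J := Ideal.span (Set.range (augGen k))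
  have hJI : J ≤ augI k := Ideal.span_le.mpr (Set.range_subset_iff.mpr augGen_mem_augI)
  have hJ : J.restrictScalars (ZMod 2) = monomialSpan (ZMod 2) (augGen k) 1 := by
    simpa using restrictScalars_span_range_pow augGen_mul_self (monomialSpan_augGen_zero k) 1
  refine le_antisymm (fun a ha => ?_) hJI
  have hmem : a ∈ monomialSpan (ZMod 2) (augGen k) 0 := monomialSpan_augGen_zero k ▸ trivial
  rw [monomialSpan_zero_eq_sup, Submodule.mem_sup] at hmem
  obtain ⟨v, hv, w, hw, rfl⟩ := hmem
  obtain ⟨c, rfl⟩ := Submodule.mem_span_singleton.mp hw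
  rw [← hJ] at hv
  have hc : c = 0 := by
    have hva : aug k v = 0 := hJI hv
    simpa [augI, hva] using ha
  simpa [hc] using hv

lemma linearIndependent_prod_augGen (k : ℕ) :
    LinearIndependent (ZMod 2) (fun S : Finset (Fin k) => ∏ i ∈ S, augGen k i) := by
  have : Module.finrank (ZMod 2) (Ak k) = 2 ^ k := by
    simp [Module.finrank_eq_card_basis (MonoidAlgebra.basis (Gk k) (ZMod 2))]
  apply linearIndependent_of_top_le_span_of_card_eq_finrank
  · rw [← monomialSpan_augGen_zero k, monomialSpan]
    exact Submodule.span_mono (Set.image_subset_range _ _)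
  · simp [this]

lemma finrank_restrictScalars_augI_pow (k q : ℕ) :
    Module.finrank (ZMod 2) ((augI k ^ q).restrictScalars (ZMod 2)) =
      Fintype.card {S : Finset (Fin k) // q ≤ S.card} := by
  rw [augI_eq_span, restrictScalars_span_range_pow augGen_mul_self (monomialSpan_augGen_zero k),
    monomialSpan, finrank_span_image_eq_card (linearIndependent_prod_augGen k)]
  rfl

theorem finrank_pow_augI_quotient_general (k q : ℕ) :
    Module.finrank (ZMod 2)
      (↥((augI k ^ q).restrictScalars (ZMod 2)) ⧸
        (((augI k ^ (q + 1)).restrictScalars (ZMod 2)).comap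
          ((augI k ^ q).restrictScalars (ZMod 2)).subtype)) = Nat.choose k q := by
  set M := (augI k ^ q).restrictScalars (ZMod 2)
  set N := (augI k ^ (q + 1)).restrictScalars (ZMod 2)
  have hNM : N ≤ M := Ideal.pow_le_pow_right q.le_succ
  have h := Submodule.finrank_quotient_add_finrank (N.comap M.subtype)
  rw [(Submodule.comapSubtypeEquivOfLe hNM).finrank_eq, finrank_restrictScalars_augI_pow k q,
    finrank_restrictScalars_augI_pow k (q + 1), card_finset_le_card_eq_add_choose (Fin k) q,
    Fintype.card_fin] at h
  omega

/-- For `0 ≤ q ≤ k`, the `F₂`-vector space `I^q / I^{q+1}` has dimension `C(k, q)`. -/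
theorem finrank_pow_augI_quotient (k q : ℕ) (hq : q ≤ k) :
    Module.finrank (ZMod 2)
      (↥((augI k ^ q).restrictScalars (ZMod 2)) ⧸
        (((augI k ^ (q + 1)).restrictScalars (ZMod 2)).comap
          ((augI k ^ q).restrictScalars (ZMod 2)).subtype)) = Nat.choose k q :=
  finrank_pow_augI_quotient_general k q

end
end

section
/- Let k be a natural number, G = (ℤ/2ℤ)^k with standard generators t_1, …, t_k, A = F₂[G] its group algebra over F₂, and I ⊆ A the augmentation ideal. For every q with 0 ≤ q ≤ k, the residue classes modulo I^{q+1} of the elements [T_S] = Σ_{g ∈ T_S} g, where S ranges over the subsets of {1,…,k} with |S| = q, form a basis of the F₂-vector space I^q / I^{q+1}. -/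
/-!
Setting: `Gk k = (ℤ/2ℤ)^k` written multiplicatively, with standard generators `tgen i`;
`Ak k = F₂[Gk k]` its group algebra over `F₂ = ZMod 2`; `aug` the augmentation homomorphism;
`augI` the augmentation ideal; `TS S` the subgroup generated by `{tgen i : i ∈ S}` and
`sumTS S = ∑ g ∈ TS S, g` its element sum in the group algebra.

The quotient `I^q / I^{q+1}` is realized as the image of `I^q` under the quotient map
`A → A / I^{q+1}` (of `F₂`-vector spaces); the statement says that the residue classes of the
elements `[T_S]` with `|S| = q` form an `F₂`-basis of it.
-/

noncomputable section

/-- The standard generator `t_i`: the element whose `i`-th coordinate is the nontrivial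
element and all other coordinates are trivial. -/
def tgen {k : ℕ} (i : Fin k) : Gk k := Multiplicative.ofAdd (Pi.single i 1)

/-- The subgroup `T_S` generated by `{t_i : i ∈ S}`. -/
def TS {k : ℕ} (S : Finset (Fin k)) : Subgroup (Gk k) :=
  Subgroup.closure (tgen '' (S : Set (Fin k)))

/-- `[T_S] = ∑_{g ∈ T_S} g`, the sum of the elements of `T_S` in the group algebra. -/
def sumTS {k : ℕ} (S : Finset (Fin k)) : Ak k :=
  haveI : Fintype (TS S) := Fintype.ofFinite _
  ∑ g : TS S, MonoidAlgebra.single (g : Gk k) (1 : ZMod 2)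

/-!
With `x_i = t_i + 1` (that is, `t_i - 1`, as we are in characteristic two) and
`x_S = ∏_{i ∈ S} x_i`, one has `x_i² = 0` and `t_i = x_i + 1`. Expanding products gives
`[T_S] = x_S` and shows that the `2^k` elements `x_S` span `A`, so they form a basis. As
`x_S ∈ I^{|S|}`, `x_S x_T` is `x_{S ∪ T}` or `0`, and the coefficient of `x_∅` is the
augmentation, `I^q` is exactly the span of the `x_S` with `|S| ≥ q`. For a filtration spanned
by the basis vectors of degree at least `q`, the classes of the basis vectors of degree exactly
`q` form a basis of each graded piece.
-/

namespace Module.Basis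

variable {ι R M : Type*} [Ring R] [AddCommGroup M] [Module R M]

def degFiltration (b : Basis ι R M) (deg : ι → ℕ) (q : ℕ) : Submodule R M :=
  Submodule.span R (b '' {i | q ≤ deg i})

variable (b : Basis ι R M) (deg : ι → ℕ) (q : ℕ)

@[simp]
theorem degFiltration_zero : b.degFiltration deg 0 = ⊤ := by
  simp [degFiltration, b.span_eq]

theorem linearIndependent_mkQ_degFiltration :
    LinearIndependent R fun i : {i // deg i = q} => (b.degFiltration deg (q + 1)).mkQ (b i) := by
  -- the coordinates of degree exactly `q` vanish on the next step, so they descend to the quotient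
  let coords := (Finsupp.lsubtypeDomain {i | deg i = q}).comp b.repr.toLinearMap
  have hker : b.degFiltration deg (q + 1) ≤ LinearMap.ker coords := by
    refine Submodule.span_le.2 ?_
    rintro _ ⟨j, hj, rfl⟩
    ext ⟨i, hi⟩
    have hji : j ≠ i := by rintro rfl; simp_all
    simp [coords, Finsupp.lsubtypeDomain_apply, hji]
  refine LinearIndependent.of_comp ((b.degFiltration deg (q + 1)).liftQ coords hker) ?_
  have hcomp : (b.degFiltration deg (q + 1)).liftQ coords hker ∘
      (fun i : {i // deg i = q} => (b.degFiltration deg (q + 1)).mkQ (b i)) =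
      fun i => Finsupp.single i 1 := by
    funext i
    ext j
    simpa [coords, Finsupp.lsubtypeDomain_apply] using
      Finsupp.single_apply_left Subtype.val_injective i j (1 : R)
  rw [hcomp]
  exact Finsupp.linearIndependent_single_one R _

theorem span_range_mkQ_degFiltration :
    Submodule.span R (Set.range fun i : {i // deg i = q} => (b.degFiltration deg (q + 1)).mkQ (b i))
      = (b.degFiltration deg q).map (b.degFiltration deg (q + 1)).mkQ := by
  refine le_antisymm ?_ ?_
  · rw [Submodule.span_le]
    rintro _ ⟨⟨i, hi⟩, rfl⟩
    exact Submodule.mem_map_of_mem (Submodule.subset_span ⟨i, hi.ge, rfl⟩)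
  · refine Submodule.map_le_iff_le_comap.2 (Submodule.span_le.2 ?_)
    rintro _ ⟨i, hi, rfl⟩
    rcases (show q ≤ deg i from hi).eq_or_lt with hq | hq
    · exact Submodule.subset_span ⟨⟨i, hq.symm⟩, rfl⟩
    · have : (b.degFiltration deg (q + 1)).mkQ (b i) = 0 :=
        (Submodule.Quotient.mk_eq_zero _).2 (Submodule.subset_span ⟨i, hq, rfl⟩)
      simp [this]

theorem exists_basis_map_mkQ_degFiltration :
    ∃ b' : Basis {i // deg i = q} R
        ((b.degFiltration deg q).map (b.degFiltration deg (q + 1)).mkQ),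
      ∀ i, (b' i : M ⧸ b.degFiltration deg (q + 1)) = Submodule.Quotient.mk (b i) :=
  ⟨(Basis.span (b.linearIndependent_mkQ_degFiltration deg q)).map
      (LinearEquiv.ofEq _ _ (b.span_range_mkQ_degFiltration deg q)), fun i => by
    rw [Basis.map_apply, LinearEquiv.coe_ofEq_apply, Basis.span_apply]; rfl⟩

end Module.Basis

section ElementaryAbelian

variable {k : ℕ}

theorem toAdd_prod_tgen_apply (S : Finset (Fin k)) (j : Fin k) :
    (∏ i ∈ S, tgen i).toAdd j = if j ∈ S then 1 else 0 := by
  simp [tgen, toAdd_prod, Finset.sum_apply, Pi.single_apply]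

theorem prod_tgen_injective : Function.Injective fun S : Finset (Fin k) => ∏ i ∈ S, tgen i := by
  intro S T h
  ext j
  have := congrFun (congrArg Multiplicative.toAdd h) j
  simp only [toAdd_prod_tgen_apply] at this
  split_ifs at this <;> simp_all

theorem exists_prod_tgen_eq (g : Gk k) : ∃ S : Finset (Fin k), ∏ i ∈ S, tgen i = g := by
  refine ⟨Finset.univ.filter (g.toAdd · ≠ 0),
    Multiplicative.toAdd.injective (funext fun j => ?_)⟩
  have : ∀ a : ZMod 2, a ≠ 0 → a = 1 := by decide
  by_cases hj : g.toAdd j = 0 <;> simp [toAdd_prod_tgen_apply, hj, this]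

theorem prod_tgen_mul_prod_tgen (S T : Finset (Fin k)) :
    (∏ i ∈ S, tgen i) * ∏ i ∈ T, tgen i = ∏ i ∈ symmDiff S T, tgen i := by
  refine Multiplicative.toAdd.injective (funext fun j => ?_)
  simp only [toAdd_mul, Pi.add_apply, toAdd_prod_tgen_apply, Finset.mem_symmDiff]
  by_cases hS : j ∈ S <;> by_cases hT : j ∈ T <;> simp [hS, hT]
  rfl

theorem mem_TS_iff {S : Finset (Fin k)} {g : Gk k} :
    g ∈ TS S ↔ ∃ T ⊆ S, ∏ i ∈ T, tgen i = g := by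
  refine ⟨fun hg => ?_, ?_⟩
  · induction hg using Subgroup.closure_induction with
    | mem _ hx =>
      obtain ⟨i, hi, rfl⟩ := hx
      exact ⟨{i}, by simpa using hi, Finset.prod_singleton _ _⟩
    | one => exact ⟨∅, Finset.empty_subset _, Finset.prod_empty⟩
    | mul _ _ _ _ hx hy =>
      obtain ⟨T, hT, rfl⟩ := hx
      obtain ⟨T', hT', rfl⟩ := hy
      exact ⟨symmDiff T T', symmDiff_le_sup.trans (sup_le hT hT'),
        (prod_tgen_mul_prod_tgen T T').symm⟩
    | inv x _ hx =>
      have hinv : x⁻¹ = x :=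
        Multiplicative.toAdd.injective (funext fun _ => ZMod.neg_eq_self_mod_two _)
      rwa [hinv]
  · rintro ⟨T, hT, rfl⟩
    exact Subgroup.prod_mem _ fun i hi => Subgroup.subset_closure ⟨i, hT hi, rfl⟩

end ElementaryAbelian

section GroupAlgebra

open MonoidAlgebra

variable {k : ℕ}

instance : CharP (Ak k) 2 := charP_of_injective_algebraMap' (ZMod 2) 2

def xGen (i : Fin k) : Ak k := of (ZMod 2) (Gk k) (tgen i) + 1

def xProd (S : Finset (Fin k)) : Ak k := ∏ i ∈ S, xGen i

theorem xGen_mul_self (i : Fin k) : xGen i * xGen i = 0 := by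
  have htt : tgen i * tgen i = 1 :=
    Multiplicative.toAdd.injective (by simp [tgen, ← Pi.single_add]; decide)
  rw [xGen, CharTwo.add_mul_self, ← map_mul, htt, map_one, one_mul,
    CharTwo.add_self_eq_zero]

theorem xProd_mul_xProd_of_disjoint {S T : Finset (Fin k)} (h : Disjoint S T) :
    xProd S * xProd T = xProd (S ∪ T) :=
  (Finset.prod_union h).symm

theorem xProd_mul_xProd_of_mem {S T : Finset (Fin k)} {i : Fin k} (hS : i ∈ S) (hT : i ∈ T) :
    xProd S * xProd T = 0 := by
  rw [xProd, xProd, ← Finset.mul_prod_erase _ _ hS, ← Finset.mul_prod_erase _ _ hT,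
    mul_mul_mul_comm, xGen_mul_self, zero_mul]

theorem of_prod_tgen (S : Finset (Fin k)) :
    of (ZMod 2) (Gk k) (∏ i ∈ S, tgen i) = ∑ T ∈ S.powerset, xProd T := by
  have ht : ∀ i, of (ZMod 2) (Gk k) (tgen i) = xGen i + 1 := fun i => by
    rw [xGen, add_assoc, CharTwo.add_self_eq_zero, add_zero]
  simp [map_prod, ht, Finset.prod_add, xProd]

theorem xProd_eq_sum (S : Finset (Fin k)) :
    xProd S = ∑ T ∈ S.powerset, of (ZMod 2) (Gk k) (∏ i ∈ T, tgen i) := by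
  simp [xProd, xGen, Finset.prod_add, map_prod]

theorem sumTS_eq_xProd (S : Finset (Fin k)) : sumTS S = xProd S := by
  have hTS : ∀ g, g ∈ S.powerset.image (fun T => ∏ i ∈ T, tgen i) ↔ g ∈ TS S := by
    simp [mem_TS_iff]
  calc sumTS S = ∑ g ∈ S.powerset.image (fun T => ∏ i ∈ T, tgen i), single g 1 :=
        (Finset.sum_subtype _ hTS fun g => single g (1 : ZMod 2)).symm
    _ = xProd S := by
      rw [Finset.sum_image prod_tgen_injective.injOn, xProd_eq_sum]
      rfl

theorem top_le_span_range_xProd : ⊤ ≤ Submodule.span (ZMod 2) (Set.range (xProd (k := k))) := by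
  rw [← (MonoidAlgebra.basis (Gk k) (ZMod 2)).span_eq, Submodule.span_le]
  rintro _ ⟨g, rfl⟩
  obtain ⟨S, rfl⟩ := exists_prod_tgen_eq g
  rw [MonoidAlgebra.basis_apply, ← of_apply, of_prod_tgen]
  exact Submodule.sum_mem _ fun T _ => Submodule.subset_span ⟨T, rfl⟩

def xBasis : Module.Basis (Finset (Fin k)) (ZMod 2) (Ak k) :=
  basisOfTopLeSpanOfCardEqFinrank xProd top_le_span_range_xProd <| by
    simp [Module.finrank_eq_card_basis (MonoidAlgebra.basis (Gk k) (ZMod 2))]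

@[simp]
theorem xBasis_apply (S : Finset (Fin k)) : xBasis S = xProd S := by
  simp [xBasis]

theorem aug_xGen (i : Fin k) : aug k (xGen i) = 0 := by
  simp [aug, xGen, CharTwo.add_self_eq_zero]

theorem aug_xProd (S : Finset (Fin k)) : aug k (xProd S) = if S = ∅ then 1 else 0 := by
  split_ifs with hS
  · simp [hS, xProd]
  · obtain ⟨i, hi⟩ := Finset.nonempty_iff_ne_empty.2 hS
    rw [xProd, map_prod]
    exact Finset.prod_eq_zero hi (aug_xGen i)

theorem xBasis_coord_empty : xBasis.coord (∅ : Finset (Fin k)) = (aug k).toLinearMap :=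
  xBasis.ext fun S => by
    rw [Module.Basis.coord_apply, Module.Basis.repr_self, AlgHom.toLinearMap_apply, xBasis_apply,
      aug_xProd, Finsupp.single_apply]

theorem xProd_mem_augI_pow (S : Finset (Fin k)) : xProd S ∈ augI k ^ S.card := by
  rw [← Finset.prod_const]
  exact Ideal.prod_mem_prod fun i _ => aug_xGen i

theorem augI_le_degFiltration_one :
    (augI k).restrictScalars (ZMod 2) ≤ xBasis.degFiltration Finset.card 1 := by
  intro a ha
  rw [Module.Basis.degFiltration, xBasis.mem_span_image]
  intro S hS
  have hempty : xBasis.repr a ∅ = 0 := by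
    rw [← Module.Basis.coord_apply, xBasis_coord_empty]
    exact ha
  refine Finset.card_pos.2 (Finset.nonempty_iff_ne_empty.2 ?_)
  rintro rfl
  exact Finsupp.mem_support_iff.1 hS hempty

theorem degFiltration_mul_le (p q : ℕ) :
    xBasis.degFiltration Finset.card p * xBasis.degFiltration Finset.card q ≤
      (xBasis (k := k)).degFiltration Finset.card (p + q) := by
  rw [Module.Basis.degFiltration, Module.Basis.degFiltration, Submodule.span_mul_span,
    Submodule.span_le]
  rintro _ ⟨_, ⟨S, hS, rfl⟩, _, ⟨T, hT, rfl⟩, rfl⟩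
  simp only [xBasis_apply]
  by_cases h : Disjoint S T
  · rw [xProd_mul_xProd_of_disjoint h, ← xBasis_apply]
    refine Submodule.subset_span ⟨_, ?_, rfl⟩
    simpa [Finset.card_union_of_disjoint h] using add_le_add hS hT
  · obtain ⟨i, hS, hT⟩ := Finset.not_disjoint_iff.1 h
    rw [xProd_mul_xProd_of_mem hS hT]
    exact zero_mem _

theorem augI_pow_eq_degFiltration (q : ℕ) :
    (augI k ^ q).restrictScalars (ZMod 2) = xBasis.degFiltration Finset.card q := by
  refine le_antisymm ?_ (Submodule.span_le.2 ?_)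
  · induction q with
    | zero => simp
    | succ q ih =>
      intro a ha
      rw [Submodule.restrictScalars_mem, pow_succ] at ha
      exact Submodule.mul_induction_on ha
        (fun x hx y hy => degFiltration_mul_le q 1
          (Submodule.mul_mem_mul (ih hx) (augI_le_degFiltration_one hy)))
        fun _ _ => add_mem
  · rintro _ ⟨S, hS, rfl⟩
    rw [xBasis_apply]
    exact Ideal.pow_le_pow_right hS (xProd_mem_augI_pow S)

end GroupAlgebra

theorem basis_pow_augI_quotient_general (k q : ℕ) :
    ∃ b : Module.Basis {S : Finset (Fin k) // S.card = q} (ZMod 2)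
      (((augI k ^ q).restrictScalars (ZMod 2)).map
        ((augI k ^ (q + 1)).restrictScalars (ZMod 2)).mkQ),
      ∀ S : {S : Finset (Fin k) // S.card = q},
        (b S : Ak k ⧸ (augI k ^ (q + 1)).restrictScalars (ZMod 2)) =
          Submodule.Quotient.mk (sumTS S.1) := by
  obtain ⟨b, hb⟩ := xBasis.exists_basis_map_mkQ_degFiltration Finset.card q
  rw [augI_pow_eq_degFiltration, augI_pow_eq_degFiltration]
  exact ⟨b, fun S => by rw [hb, xBasis_apply, sumTS_eq_xProd]⟩

/-- For `0 ≤ q ≤ k`, the residue classes mod `I^{q+1}` of the elements `[T_S]`,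
for `S` ranging over the `q`-element subsets of `{1,…,k}`, form a basis of the
`F₂`-vector space `I^q / I^{q+1}`. -/
theorem basis_pow_augI_quotient (k q : ℕ) (hq : q ≤ k) :
    ∃ b : Module.Basis {S : Finset (Fin k) // S.card = q} (ZMod 2)
      (((augI k ^ q).restrictScalars (ZMod 2)).map
        ((augI k ^ (q + 1)).restrictScalars (ZMod 2)).mkQ),
      ∀ S : {S : Finset (Fin k) // S.card = q},
        (b S : Ak k ⧸ (augI k ^ (q + 1)).restrictScalars (ZMod 2)) =
          Submodule.Quotient.mk (sumTS S.1) :=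
  basis_pow_augI_quotient_general k q

end
end
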